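/- arXiv:2011.05353 — 5 statements merged into one kernel-verified Lean document; each statement's English description precedes it below -/
import Mathlib

section
/- Let (V,E) be a temporal graph over timestamps {0,…,T} and let α ∈ [0,1]. Every directed path p in the transformed graph G' from a replica (u,t_i) to a replica (v,t_j) whose first and last edges are snapshot edges projects (by deleting the waiting edges and reading each snapshot edge ((x,t),(y,t)) as the timestamped edge (x,y,t)) to a valid temporal path p' from u to v in (V,E), and the length of p in G' equals the cost of p', i.e. ℓ(p) = L(p'). -/
open scoped ENNReal BigOperators

variable {V : Type*}

/-- `p` is a temporal path from `u` to `v` with edges in `E`: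
a nonempty list of timestamped edges, consecutive in space and
with nondecreasing timestamps. -/
def IsTempPath (E : Set (V × V × ℕ)) (u v : V) (p : List (V × V × ℕ)) : Prop :=
  p ≠ [] ∧ (∀ e ∈ p, e ∈ E) ∧
    List.Chain' (fun e f : V × V × ℕ => e.2.1 = f.1 ∧ e.2.2 ≤ f.2.2) p ∧
    p.head?.map Prod.fst = some u ∧
    p.getLast?.map (fun e => e.2.1) = some v

/-- Timestamp of the first edge of a temporal path. -/
def firstTime (p : List (V × V × ℕ)) : ℕ := (p.head?.map (fun e => e.2.2)).getD 0

/-- Timestamp of the last edge of a temporal path. -/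
def lastTime (p : List (V × V × ℕ)) : ℕ := (p.getLast?.map (fun e => e.2.2)).getD 0

/-- Cost `L_α(p) = α·(number of edges) + (1-α)·(t_n - t_0)` of a temporal path. -/
noncomputable def costL (α : ℝ) (p : List (V × V × ℕ)) : ℝ :=
  α * p.length + (1 - α) * ((lastTime p : ℝ) - (firstTime p : ℝ))

/-- Shortest-fastest-path distance: infimum of `L_α` over temporal paths from `u` to `v`,
taken in `ℝ≥0∞` (so `∞` if no temporal path exists). -/
noncomputable def sfpDist (α : ℝ) (E : Set (V × V × ℕ)) (u v : V) : ℝ≥0∞ :=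
  sInf {c : ℝ≥0∞ | ∃ p, IsTempPath E u v p ∧ c = ENNReal.ofReal (costL α p)}

/-- Adjacency of the transformed graph `G'` on `V × {0,…,T}`:
waiting edges `(v,t) → (v,t+1)` and snapshot edges `(u,t) → (v,t)` for `(u,v,t) ∈ E`. -/
def TransAdj (E : Set (V × V × ℕ)) (T : ℕ) : V × ℕ → V × ℕ → Prop := fun a b =>
  (a.1 = b.1 ∧ b.2 = a.2 + 1 ∧ b.2 ≤ T) ∨ ((a.1, b.1, a.2) ∈ E ∧ b.2 = a.2)

/-- Weight of an edge of the transformed graph: `α` for snapshot edges (same timestamp),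
`1 - α` for waiting edges. -/
noncomputable def transWeight (α : ℝ) (a b : V × ℕ) : ℝ := if a.2 = b.2 then α else 1 - α

/-- Length `ℓ` of a path in the transformed graph (given as its list of visited vertices):
the sum of the weights of its edges. -/
noncomputable def transLen (α : ℝ) (p : List (V × ℕ)) : ℝ :=
  ((p.zip p.tail).map fun ab => transWeight α ab.1 ab.2).sum

/-- `p` is a directed path in the transformed graph from `x` to `y`,
given as its (nonempty) list of visited vertices. -/
def IsTransPath (E : Set (V × V × ℕ)) (T : ℕ) (x y : V × ℕ) (p : List (V × ℕ)) : Prop :=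
  p ≠ [] ∧ List.Chain' (TransAdj E T) p ∧ p.head? = some x ∧ p.getLast? = some y

/-- Projection of a transformed-graph path to a list of timestamped edges:
delete the waiting edges and read each snapshot edge `((x,t),(y,t))` as `(x,y,t)`. -/
def project (p : List (V × ℕ)) : List (V × V × ℕ) :=
  ((p.zip p.tail).filter fun ab => ab.1.2 == ab.2.2).map fun ab => (ab.1.1, ab.2.1, ab.1.2)

/-- Shortest-path distance in the transformed graph, in `ℝ≥0∞`. -/
noncomputable def transDist (E : Set (V × V × ℕ)) (T : ℕ) (α : ℝ) (x y : V × ℕ) : ℝ≥0∞ :=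
  sInf {c : ℝ≥0∞ | ∃ p, IsTransPath E T x y p ∧ c = ENNReal.ofReal (transLen α p)}

/-- Shortest-path distance (number of edges) in a static graph with adjacency `A`,
in `ℝ≥0∞`: the infimum of the number of edges over (nonempty) walks from `u` to `v`. -/
noncomputable def staticDist (A : V → V → Prop) (u v : V) : ℝ≥0∞ :=
  sInf {c : ℝ≥0∞ | ∃ p : List (V × V), p ≠ [] ∧ (∀ e ∈ p, A e.1 e.2) ∧
    List.Chain' (fun e f : V × V => e.2 = f.1) p ∧
    p.head?.map Prod.fst = some u ∧ p.getLast?.map Prod.snd = some v ∧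
    c = (p.length : ℝ≥0∞)}

/-- Per-pair temporal inefficiency `[(1 - α/d(v,u)) + (1 - α/d(u,v))]/2`,
with the convention `α/∞ = 0` (via `ENNReal.toReal`). -/
noncomputable def perPairIneff (α : ℝ) (E : Set (V × V × ℕ)) (u v : V) : ℝ :=
  ((1 - α / (sfpDist α E v u).toReal) + (1 - α / (sfpDist α E u v).toReal)) / 2

/-- Temporal network inefficiency: the sum of the per-pair inefficiency over unordered
pairs of distinct vertices (the summand is symmetric, so we sum over ordered pairs and
halve). -/
noncomputable def tempIneff (α : ℝ) (E : Set (V × V × ℕ)) [Fintype V] [DecidableEq V] : ℝ :=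
  (∑ q ∈ Finset.univ.offDiag, perPairIneff α E (Prod.fst q) (Prod.snd q)) / 2

/-- Temporal edges of the subgraph induced by `S`. -/
def inducedE (E : Set (V × V × ℕ)) (S : Set V) : Set (V × V × ℕ) :=
  {e ∈ E | e.1 ∈ S ∧ e.2.1 ∈ S}

/-- Temporal network inefficiency of the temporal subgraph induced by a finite set `S`. -/
noncomputable def tempIneffOn (α : ℝ) (E : Set (V × V × ℕ)) [DecidableEq V]
    (S : Finset V) : ℝ :=
  (∑ q ∈ S.offDiag, perPairIneff α (inducedE E ↑S) (Prod.fst q) (Prod.snd q)) / 2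

/-- Static network inefficiency `Σ_{u ≠ v ∈ S} (1 - 1/d_{G[S]}(u,v))` (unordered pairs,
with `1/∞ = 0`) of the subgraph induced by `S` in the static graph with adjacency `A`. -/
noncomputable def staticIneffOn (A : V → V → Prop) [DecidableEq V] (S : Finset V) : ℝ :=
  (∑ q ∈ S.offDiag,
    (1 - 1 / (staticDist (fun x y => A x y ∧ x ∈ S ∧ y ∈ S)
      (Prod.fst q) (Prod.snd q)).toReal)) / 2

/-!
Snapshot edges keep the timestamp and waiting edges raise it by one, so along a path of `G'`
the timestamp grows by exactly the number of waiting edges, while the projection keeps the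
snapshot edges in order. Hence `ℓ(p) = α·#snapshots + (1-α)·#waits` is the cost of the
projection, provided its first and last timestamps are those of the endpoints of `p`: this is
where the first and last edges of `p` must be snapshot edges.
-/

namespace List

variable {α : Type*} {l : List α} {e : α × α}

theorem head?_of_head?_zip_tail (h : (l.zip l.tail).head? = some e) : l.head? = some e.1 := by
  match l, h with
  | _ :: _ :: _, h => simp at h; simp [← h]

theorem getLast?_of_getLast?_zip_tail (h : (l.zip l.tail).getLast? = some e) :
    l.getLast? = some e.2 := by
  induction l with
  | nil => simp at h
  | cons a t ih =>
    match t, h, ih with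
    | [b], h, _ => simp at h; simp [← h]
    | b :: c :: t, h, ih =>
      rw [getLast?_cons_cons]
      exact ih (by simpa [getLast?_cons_cons] using h)

end List

section TransformedGraph

variable {V : Type*} {E : Set (V × V × ℕ)} {T : ℕ} {a b : V × ℕ} {p : List (V × ℕ)}

@[simp]
theorem project_nil : project ([] : List (V × ℕ)) = [] := rfl

@[simp]
theorem project_singleton : project [a] = [] := rfl

theorem project_cons_cons (t : List (V × ℕ)) :
    project (a :: b :: t) =
      if a.2 = b.2 then (a.1, b.1, a.2) :: project (b :: t) else project (b :: t) := by
  by_cases h : a.2 = b.2 <;> simp [project, h]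

theorem transLen_cons_cons (α : ℝ) (t : List (V × ℕ)) :
    transLen α (a :: b :: t) = transWeight α a b + transLen α (b :: t) := by
  simp [transLen]

theorem TransAdj.mem_of_snd_eq (h : TransAdj E T a b) (hs : a.2 = b.2) : (a.1, b.1, a.2) ∈ E := by
  rcases h with ⟨-, h, -⟩ | ⟨h, -⟩
  · omega
  · exact h

theorem TransAdj.waiting_of_snd_ne (h : TransAdj E T a b) (hs : a.2 ≠ b.2) :
    a.1 = b.1 ∧ b.2 = a.2 + 1 := by
  rcases h with ⟨h₁, h₂, -⟩ | ⟨-, h⟩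
  · exact ⟨h₁, h₂⟩
  · omega

theorem mem_of_mem_project (hp : p.IsChain (TransAdj E T)) : ∀ e ∈ project p, e ∈ E := by
  induction hp with
  | nil | singleton => simp
  | @cons_cons a b t hab _ ih =>
    rw [project_cons_cons]
    split_ifs with hs
    · simpa [hab.mem_of_snd_eq hs] using ih
    · exact ih

theorem fst_eq_and_le_of_head?_project (hp : p.IsChain (TransAdj E T)) (ha : p.head? = some a)
    {e : V × V × ℕ} (he : (project p).head? = some e) : e.1 = a.1 ∧ a.2 ≤ e.2.2 := by
  induction hp generalizing a with
  | nil | singleton => simp at he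
  | @cons_cons c b t hcb _ ih =>
    obtain rfl : c = a := by simpa using ha
    rw [project_cons_cons] at he
    split_ifs at he with hs
    · simp at he
      simp [← he]
    · obtain ⟨h₁, h₂⟩ := hcb.waiting_of_snd_ne hs
      obtain ⟨he₁, he₂⟩ := ih rfl he
      exact ⟨he₁.trans h₁.symm, by omega⟩

theorem isChain_project (hp : p.IsChain (TransAdj E T)) :
    (project p).IsChain (fun e f : V × V × ℕ => e.2.1 = f.1 ∧ e.2.2 ≤ f.2.2) := by
  induction hp with
  | nil | singleton => simp
  | @cons_cons a b t _ hbt ih =>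
    rw [project_cons_cons]
    split_ifs with hs
    · refine List.isChain_cons.2 ⟨fun f hf => ?_, ih⟩
      obtain ⟨hf₁, hf₂⟩ := fst_eq_and_le_of_head?_project hbt rfl hf
      exact ⟨hf₁.symm, hs ▸ hf₂⟩
    · exact ih

theorem transLen_eq (α : ℝ) (hp : p.IsChain (TransAdj E T)) (ha : p.head? = some a)
    (hb : p.getLast? = some b) :
    transLen α p = α * (project p).length + (1 - α) * ((b.2 : ℝ) - a.2) := by
  induction hp generalizing a with
  | nil => simp at ha
  | singleton c =>
    obtain rfl : c = a := by simpa using ha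
    obtain rfl : c = b := by simpa using hb
    simp [transLen]
  | @cons_cons c d t hcd _ ih =>
    obtain rfl : c = a := by simpa using ha
    rw [List.getLast?_cons_cons] at hb
    rw [transLen_cons_cons, ih rfl hb, project_cons_cons, transWeight]
    split_ifs with hs
    · simp [hs]
      ring
    · have := (hcd.waiting_of_snd_ne hs).2
      simp [this]
      ring

theorem project_head?_of_zip_tail {e : (V × ℕ) × (V × ℕ)} (he : (p.zip p.tail).head? = some e)
    (hs : e.1.2 = e.2.2) : (project p).head? = some (e.1.1, e.2.1, e.1.2) := by
  obtain ⟨l, hl⟩ := List.head?_eq_some_iff.1 he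
  simp [project, hl, hs]

theorem project_getLast?_of_zip_tail {e : (V × ℕ) × (V × ℕ)}
    (he : (p.zip p.tail).getLast? = some e) (hs : e.1.2 = e.2.2) :
    (project p).getLast? = some (e.1.1, e.2.1, e.1.2) := by
  obtain ⟨l, hl⟩ := List.getLast?_eq_some_iff.1 he
  simp [project, hl, hs]

end TransformedGraph

theorem stmt0_general (T : ℕ) (E : Set (V × V × ℕ)) (α : ℝ)
    (u v : V) (ti tj : ℕ)
    (p : List (V × ℕ)) (hp : IsTransPath E T (u, ti) (v, tj) p)
    (hfirst : ∃ e, (p.zip p.tail).head? = some e ∧ e.1.2 = e.2.2)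
    (hlast : ∃ e, (p.zip p.tail).getLast? = some e ∧ e.1.2 = e.2.2) :
    IsTempPath E u v (project p) ∧ transLen α p = costL α (project p) := by
  obtain ⟨-, hchain, hhead, hgetLast⟩ := hp
  obtain ⟨e, he, hes⟩ := hfirst
  obtain ⟨f, hf, hfs⟩ := hlast
  have he₁ : e.1 = (u, ti) := by
    simpa [hhead] using (List.head?_of_head?_zip_tail he).symm
  have hf₂ : f.2 = (v, tj) := by
    simpa [hgetLast] using (List.getLast?_of_getLast?_zip_tail hf).symm
  have hprojHead := project_head?_of_zip_tail he hes
  have hprojLast := project_getLast?_of_zip_tail hf hfs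
  refine ⟨⟨?_, mem_of_mem_project hchain, isChain_project hchain, ?_, ?_⟩, ?_⟩
  · rintro hnil
    simp [hnil] at hprojHead
  · simp [hprojHead, he₁]
  · simp [hprojLast, hf₂]
  · rw [transLen_eq α hchain hhead hgetLast, costL, firstTime, lastTime, hprojHead, hprojLast]
    simp [he₁, hfs, hf₂]

/-- every directed path in the transformed graph `G'` from a replica
`(u,t_i)` to a replica `(v,t_j)` whose first and last edges are snapshot edges projects
to a valid temporal path from `u` to `v`, of cost equal to the length of the original
path. -/
theorem stmt0 (T : ℕ) (E : Set (V × V × ℕ)) (α : ℝ)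
    (hsym : ∀ u v t, (u, v, t) ∈ E ↔ (v, u, t) ∈ E)
    (hT : ∀ e ∈ E, e.2.2 ≤ T) (hα0 : 0 ≤ α) (hα1 : α ≤ 1)
    (u v : V) (ti tj : ℕ) (hti : ti ≤ T) (htj : tj ≤ T)
    (p : List (V × ℕ)) (hp : IsTransPath E T (u, ti) (v, tj) p)
    (hfirst : ∃ e, (p.zip p.tail).head? = some e ∧ e.1.2 = e.2.2)
    (hlast : ∃ e, (p.zip p.tail).getLast? = some e ∧ e.1.2 = e.2.2) :
    IsTempPath E u v (project p) ∧ transLen α p = costL α (project p) :=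
  stmt0_general T E α u v ti tj p hp hfirst hlast
end

section
/- Let (V,E) be a finite temporal graph over timestamps {0,…,T} and let u, v ∈ V be such that at least one temporal path from u to v exists. Then there exists ε > 0 such that for all α ∈ (0,ε), a temporal path p from u to v minimizes the cost L_α if and only if p has minimum duration t_n − t_0 among all temporal paths from u to v and, among all temporal paths of minimum duration, p has the minimum number of edges. -/
open scoped ENNReal BigOperators

variable {V : Type*}

lemma chain'_first_le_last : ∀ (p : List (V × V × ℕ)),
    List.Chain' (fun e f : V × V × ℕ => e.2.1 = f.1 ∧ e.2.2 ≤ f.2.2) p →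
    firstTime p ≤ lastTime p
  | [], _ => le_refl _
  | [a], _ => le_refl _
  | a :: b :: l, h => by
      have h1 : a.2.2 ≤ b.2.2 := (List.isChain_cons_cons.mp h).1.2
      have h2 := chain'_first_le_last (b :: l) (List.isChain_cons_cons.mp h).2
      simpa [firstTime, lastTime, List.getLast?_cons_cons] using
        le_trans h1 (by simpa [firstTime, lastTime] using h2)

lemma tempPath_first_le_last {E : Set (V × V × ℕ)} {u v : V} {p : List (V × V × ℕ)}
    (h : IsTempPath E u v p) : firstTime p ≤ lastTime p :=
  chain'_first_le_last p h.2.2.1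

/-- on a finite temporal graph, if a temporal path from `u` to `v` exists,
then for all small enough `α ∈ (0,ε)` a temporal path minimizes `L_α` iff it has minimum
duration, and minimum number of edges among the minimum-duration paths. -/
theorem stmt5 [Finite V] (T : ℕ) (E : Set (V × V × ℕ))
    (hsym : ∀ u v t, (u, v, t) ∈ E ↔ (v, u, t) ∈ E)
    (hT : ∀ e ∈ E, e.2.2 ≤ T) (u v : V)
    (hex : ∃ p, IsTempPath E u v p) :
    ∃ ε > (0 : ℝ), ∀ α : ℝ, 0 < α → α < ε →
      ∀ p, IsTempPath E u v p →
        ((∀ q, IsTempPath E u v q → costL α p ≤ costL α q) ↔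
          ((∀ q, IsTempPath E u v q →
              lastTime p - firstTime p ≤ lastTime q - firstTime q) ∧
           (∀ q, IsTempPath E u v q →
              lastTime q - firstTime q = lastTime p - firstTime p →
              p.length ≤ q.length))) := by
  classical
  have hDne : {d : ℕ | ∃ p, IsTempPath E u v p ∧ lastTime p - firstTime p = d}.Nonempty := by
    obtain ⟨p, hp⟩ := hex; exact ⟨_, p, hp, rfl⟩
  set D := sInf {d : ℕ | ∃ p, IsTempPath E u v p ∧ lastTime p - firstTime p = d} with hDdef
  have hDle : ∀ q, IsTempPath E u v q → D ≤ lastTime q - firstTime q :=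
    fun q hq => Nat.sInf_le ⟨q, hq, rfl⟩
  obtain ⟨p₁, hp₁, hp₁D⟩ := Nat.sInf_mem hDne
  set N := sInf {n : ℕ | ∃ p, IsTempPath E u v p ∧ lastTime p - firstTime p = D ∧ p.length = n}
    with hNdef
  have hNne : {n : ℕ | ∃ p, IsTempPath E u v p ∧ lastTime p - firstTime p = D ∧
      p.length = n}.Nonempty := ⟨p₁.length, p₁, hp₁, hp₁D, rfl⟩
  obtain ⟨p₀, hp₀, hp₀D, hp₀N⟩ := Nat.sInf_mem hNne
  rw [← hNdef] at hp₀N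
  have hNle : ∀ q, IsTempPath E u v q → lastTime q - firstTime q = D → N ≤ q.length :=
    fun q hq hqD => Nat.sInf_le ⟨q, hq, hqD, rfl⟩
  have hlen1 : ∀ q : List (V × V × ℕ), IsTempPath E u v q → 1 ≤ q.length := by
    intro q hq
    exact List.length_pos_iff.mpr hq.1
  have hN1 : 1 ≤ N := hp₀N ▸ hlen1 p₀ hp₀
  have hNR : (0 : ℝ) < N := by exact_mod_cast Nat.lt_of_lt_of_le Nat.zero_lt_one hN1
  refine ⟨1 / N, by positivity, ?_⟩
  intro α hα hαN p hp
  have hαN' : α * N < 1 := by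
    have h := mul_lt_mul_of_pos_right hαN hNR
    rwa [one_div_mul_cancel (ne_of_gt hNR)] at h
  have hα1 : α < 1 := by
    have hNge : (1 : ℝ) ≤ N := by exact_mod_cast hN1
    nlinarith
  have costeq : ∀ q, IsTempPath E u v q →
      costL α q = α * q.length + (1 - α) * ((lastTime q - firstTime q : ℕ) : ℝ) := by
    intro q hq
    unfold costL
    rw [Nat.cast_sub (tempPath_first_le_last hq)]
  constructor
  · intro hmin
    have hpD : lastTime p - firstTime p = D := by
      by_contra h
      have h1 : D + 1 ≤ lastTime p - firstTime p :=
        Nat.succ_le_of_lt (lt_of_le_of_ne (hDle p hp) (Ne.symm h))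
      have h2 := hmin p₀ hp₀
      rw [costeq p hp, costeq p₀ hp₀, hp₀D, hp₀N] at h2
      have h1R : (D : ℝ) + 1 ≤ ((lastTime p - firstTime p : ℕ) : ℝ) := by exact_mod_cast h1
      have hlpR : (1 : ℝ) ≤ (p.length : ℝ) := by exact_mod_cast hlen1 p hp
      have h1a : (0:ℝ) ≤ 1 - α := by linarith
      have e1 : (1 - α) * ((D : ℝ) + 1) ≤ (1 - α) * ((lastTime p - firstTime p : ℕ) : ℝ) :=
        mul_le_mul_of_nonneg_left h1R h1a
      have e2 : α * 1 ≤ α * (p.length : ℝ) := mul_le_mul_of_nonneg_left hlpR hα.le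
      linarith
    refine ⟨fun q hq => hpD ▸ hDle q hq, ?_⟩
    intro q hq hqd
    have h2 := hmin q hq
    rw [costeq p hp, costeq q hq, hqd] at h2
    have hle : (p.length : ℝ) ≤ (q.length : ℝ) := by
      have h3 : α * (p.length : ℝ) ≤ α * (q.length : ℝ) := by linarith
      exact le_of_mul_le_mul_left h3 hα
    exact_mod_cast hle
  · rintro ⟨h1, h2⟩ q hq
    have hpD : lastTime p - firstTime p = D :=
      le_antisymm (hp₀D ▸ h1 p₀ hp₀) (hDle p hp)
    have hplen : p.length ≤ N := hp₀N ▸ h2 p₀ hp₀ (by rw [hp₀D, hpD])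
    rw [costeq p hp, costeq q hq, hpD]
    have hplR : (p.length : ℝ) ≤ (N : ℝ) := by exact_mod_cast hplen
    by_cases hqD : lastTime q - firstTime q = D
    · have hNq : (p.length : ℝ) ≤ (q.length : ℝ) := by
        exact_mod_cast le_trans hplen (hNle q hq hqD)
      rw [hqD]
      have e3 : α * (p.length : ℝ) ≤ α * (q.length : ℝ) :=
        mul_le_mul_of_nonneg_left hNq hα.le
      linarith
    · have hd1 : D + 1 ≤ lastTime q - firstTime q :=
        Nat.succ_le_of_lt (lt_of_le_of_ne (hDle q hq) (Ne.symm hqD))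
      have hd1R : (D : ℝ) + 1 ≤ ((lastTime q - firstTime q : ℕ) : ℝ) := by exact_mod_cast hd1
      have hlqR : (1 : ℝ) ≤ (q.length : ℝ) := by exact_mod_cast hlen1 q hq
      have h1a : (0:ℝ) ≤ 1 - α := by linarith
      have e1 : (1 - α) * ((D : ℝ) + 1) ≤ (1 - α) * ((lastTime q - firstTime q : ℕ) : ℝ) :=
        mul_le_mul_of_nonneg_left hd1R h1a
      have e2 : α * 1 ≤ α * (q.length : ℝ) := mul_le_mul_of_nonneg_left hlqR hα.le
      have e3 : α * (p.length : ℝ) ≤ α * (N : ℝ) := mul_le_mul_of_nonneg_left hplR hα.le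
      linarith
end

section
/- Let (V,E) be a finite temporal graph over timestamps {0,…,T} and let u, v ∈ V be such that at least one temporal path from u to v exists. Then there exists ε > 0 such that for all α ∈ (1−ε,1), a temporal path p from u to v minimizes the cost L_α if and only if p has the minimum number of edges among all temporal paths from u to v and, among all temporal paths with that minimum number of edges, p has minimum duration t_n − t_0. -/
/-!
A temporal path's duration `t_n - t_0` lies in `[0, T]`, so once `(1 - α) * T < α` one extra
edge costs more than any saving in duration can recover. `L_α` then orders temporal paths
lexicographically by (number of edges, duration), and `ε = 1 / (T + 1)` achieves this.
-/

open scoped ENNReal BigOperators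

variable {V : Type*}

namespace IsTempPath

variable {E : Set (V × V × ℕ)} {u v : V} {p : List (V × V × ℕ)}

theorem firstTime_le_lastTime (hp : IsTempPath E u v p) : firstTime p ≤ lastTime p := by
  obtain ⟨hne, -, hchain, -, -⟩ := hp
  obtain ⟨a, l, rfl⟩ := List.exists_cons_of_ne_nil hne
  have hsorted : (a :: l).Pairwise fun e f : V × V × ℕ => e.2.2 ≤ f.2.2 :=
    List.isChain_iff_pairwise.mp (hchain.imp fun _ _ h => h.2)
  simp only [firstTime, lastTime, List.head?_cons, List.getLast?_eq_getLast_of_ne_nil hne,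
    Option.map_some, Option.getD_some]
  rcases List.mem_cons.mp (List.getLast_mem hne) with h | h
  · rw [h]
  · exact List.rel_of_pairwise_cons hsorted h

theorem lastTime_le {T : ℕ} (hT : ∀ e ∈ E, e.2.2 ≤ T) (hp : IsTempPath E u v p) :
    lastTime p ≤ T := by
  obtain ⟨hne, hE, -, -, -⟩ := hp
  simpa [lastTime, List.getLast?_eq_getLast_of_ne_nil hne] using hT _ (hE _ (List.getLast_mem hne))

theorem costL_eq (hp : IsTempPath E u v p) (α : ℝ) :
    costL α p = α * p.length + (1 - α) * ((lastTime p - firstTime p : ℕ) : ℝ) := by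
  rw [costL, Nat.cast_sub hp.firstTime_le_lastTime]

end IsTempPath

section WeightedCost

variable {α : ℝ} {D : ℕ}

theorem weightedCost_lt_of_lt (hα : α < 1) (hαD : (1 - α) * D < α) {m n c d : ℕ}
    (hc : c ≤ D) (hmn : m < n) :
    α * m + (1 - α) * c < α * n + (1 - α) * d := by
  have hα0 : 0 ≤ α := by nlinarith [(Nat.cast_nonneg D : (0 : ℝ) ≤ D)]
  have hmn' : (m : ℝ) + 1 ≤ n := by exact_mod_cast hmn
  calc α * m + (1 - α) * c ≤ α * m + (1 - α) * D := by gcongr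
    _ < α * (m + 1) := by linarith
    _ ≤ α * n := by gcongr
    _ ≤ α * n + (1 - α) * d := le_add_of_nonneg_right (by positivity)

theorem weightedCost_minimal_iff {ι : Type*} {S : ι → Prop} {len dur : ι → ℕ}
    (hα : α < 1) (hαD : (1 - α) * D < α) (hD : ∀ q, S q → dur q ≤ D) {p : ι} (hp : S p) :
    (∀ q, S q → α * len p + (1 - α) * dur p ≤ α * len q + (1 - α) * dur q) ↔
      (∀ q, S q → len p ≤ len q) ∧ (∀ q, S q → len q = len p → dur p ≤ dur q) := by
  constructor
  · intro hmin
    refine ⟨fun q hq => ?_, fun q hq hlen => ?_⟩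
    · by_contra! hlt
      exact (hmin q hq).not_gt (weightedCost_lt_of_lt hα hαD (hD q hq) hlt)
    · have hcost := hmin q hq
      rw [hlen] at hcost
      have hscaled : ((1 - α) * dur p : ℝ) ≤ (1 - α) * dur q := by linarith
      exact_mod_cast le_of_mul_le_mul_left hscaled (sub_pos.mpr hα)
  · rintro ⟨hlen, hdur⟩ q hq
    rcases (hlen q hq).lt_or_eq with hlt | heq
    · exact (weightedCost_lt_of_lt hα hαD (hD p hp) hlt).le
    · rw [heq]
      have hd := hdur q hq heq.symm
      gcongr

end WeightedCost

theorem stmt6_general (T : ℕ) (E : Set (V × V × ℕ))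
    (hT : ∀ e ∈ E, e.2.2 ≤ T) (u v : V) :
    ∃ ε > (0 : ℝ), ∀ α : ℝ, 1 - ε < α → α < 1 →
      ∀ p, IsTempPath E u v p →
        ((∀ q, IsTempPath E u v q → costL α p ≤ costL α q) ↔
          ((∀ q, IsTempPath E u v q → p.length ≤ q.length) ∧
           (∀ q, IsTempPath E u v q → q.length = p.length →
              lastTime p - firstTime p ≤ lastTime q - firstTime q))) := by
  refine ⟨1 / (T + 1), by positivity, fun α hα1 hα2 p hp => ?_⟩
  have hαT : (1 - α) * T < α := by
    have hscaled : (1 - α) * (T + 1) < 1 := by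
      rw [← lt_div_iff₀ (by positivity)]
      linarith
    linarith
  rw [← weightedCost_minimal_iff (len := List.length) hα2 hαT
    (fun q hq => (Nat.sub_le _ _).trans (hq.lastTime_le hT)) hp]
  refine forall₂_congr fun q hq => ?_
  rw [hp.costL_eq, hq.costL_eq]

/-- on a finite temporal graph, if a temporal path from `u` to `v` exists,
then for all `α ∈ (1-ε,1)` with `ε` small enough, a temporal path minimizes `L_α` iff it
has the minimum number of edges, and minimum duration among the minimum-edge paths. -/
theorem stmt6 [Finite V] (T : ℕ) (E : Set (V × V × ℕ))
    (hsym : ∀ u v t, (u, v, t) ∈ E ↔ (v, u, t) ∈ E)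
    (hT : ∀ e ∈ E, e.2.2 ≤ T) (u v : V)
    (hex : ∃ p, IsTempPath E u v p) :
    ∃ ε > (0 : ℝ), ∀ α : ℝ, 1 - ε < α → α < 1 →
      ∀ p, IsTempPath E u v p →
        ((∀ q, IsTempPath E u v q → costL α p ≤ costL α q) ↔
          ((∀ q, IsTempPath E u v q → p.length ≤ q.length) ∧
           (∀ q, IsTempPath E u v q → q.length = p.length →
              lastTime p - firstTime p ≤ lastTime q - firstTime q))) :=
  stmt6_general T E hT u v
end

section
/- Let (V,E) be a finite temporal graph consisting of a single timestamp (T = 0), let G be the static undirected graph on V with edge set {(u,v) : (u,v,0) ∈ E}, and take α = 1. Then for every S ⊆ V the temporal network inefficiency of the temporal subgraph induced by S equals the static network inefficiency Σ_{u,v ∈ S, u ≠ v, unordered pairs} (1 − 1/d_{G[S]}(u,v)), where d_{G[S]} is the shortest-path distance in the subgraph of G induced by S; consequently, for every query set Q ⊆ V, a set S with Q ⊆ S ⊆ V minimizes the temporal inefficiency of the induced temporal subgraph if and only if it minimizes the static network inefficiency of G[S], i.e. the Minimum Temporal-Inefficiency Subgraph problem specializes to the static Minimum-Inefficiency-Subgraph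 problem. -/
open scoped ENNReal BigOperators

variable {V : Type*}

/-
For `α = 1` the cost of a temporal path is its number of edges, and when every timestamp is
`0`, forgetting the timestamps is a bijection between temporal paths and static walks, so
shortest-fastest distances are static distances. The per-pair inefficiency then averages
the two orientations of a static term, and summing over ordered pairs (invariant under
swapping) recovers the static inefficiency; equal objectives have the same minimizers.
-/

theorem Finset.sum_offDiag_swap {α M : Type*} [DecidableEq α] [AddCommMonoid M]
    (s : Finset α) (f : α → α → M) :
    ∑ q ∈ s.offDiag, f q.2 q.1 = ∑ q ∈ s.offDiag, f q.1 q.2 :=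
  Finset.sum_nbij' Prod.swap Prod.swap (by simp +contextual [eq_comm])
    (by simp +contextual [eq_comm]) (by simp) (by simp) (by simp)

theorem costL_one (p : List (V × V × ℕ)) : costL 1 p = p.length := by
  simp [costL]

theorem sfpDist_one_eq_staticDist {E : Set (V × V × ℕ)} (hT0 : ∀ e ∈ E, e.2.2 = 0)
    (u v : V) : sfpDist 1 E u v = staticDist (fun x y => (x, y, 0) ∈ E) u v := by
  unfold sfpDist staticDist
  congr 1
  ext c
  simp only [Set.mem_ofPred_eq, costL_one, ENNReal.ofReal_natCast]
  constructor
  · rintro ⟨p, ⟨hne, hmem, hchain, hhead, hlast⟩, rfl⟩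
    refine ⟨p.map fun e => (e.1, e.2.1), by simpa using hne, ?_, ?_, ?_, ?_, by simp⟩
    · simp only [List.mem_map, forall_exists_index, and_imp]
      rintro _ ⟨x, y, t⟩ he rfl
      obtain rfl : t = 0 := hT0 _ (hmem _ he)
      exact hmem _ he
    · exact List.isChain_map _ |>.2 (hchain.imp fun _ _ h => h.1)
    · rwa [List.head?_map, Option.map_map]
    · rwa [List.getLast?_map, Option.map_map]
  · rintro ⟨q, hne, hmem, hchain, hhead, hlast, rfl⟩
    refine ⟨q.map fun e => (e.1, e.2, 0), ⟨by simpa using hne, ?_, ?_, ?_, ?_⟩, by simp⟩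
    · simp only [List.mem_map, forall_exists_index, and_imp]
      rintro _ e he rfl
      exact hmem e he
    · exact List.isChain_map _ |>.2 (hchain.imp fun _ _ h => ⟨h, le_rfl⟩)
    · rwa [List.head?_map, Option.map_map]
    · rwa [List.getLast?_map, Option.map_map]

theorem tempIneffOn_one_eq_staticIneffOn [DecidableEq V] {E : Set (V × V × ℕ)}
    (hT0 : ∀ e ∈ E, e.2.2 = 0) (S : Finset V) :
    tempIneffOn 1 E S = staticIneffOn (fun x y => (x, y, 0) ∈ E) S := by
  have hS : ∀ e ∈ inducedE E ↑S, e.2.2 = 0 := fun e he => hT0 e he.1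
  unfold tempIneffOn staticIneffOn perPairIneff
  simp only [sfpDist_one_eq_staticDist hS]
  rw [← Finset.sum_div, Finset.sum_add_distrib,
    Finset.sum_offDiag_swap S fun u v => 1 - 1 / (staticDist _ u v).toReal, add_self_div_two]
  rfl

theorem stmt11_general [DecidableEq V] (E : Set (V × V × ℕ))
    (hT0 : ∀ e ∈ E, e.2.2 = 0) :
    (∀ S : Finset V,
      tempIneffOn 1 E S = staticIneffOn (fun x y => (x, y, 0) ∈ E) S) ∧
    (∀ Q S : Finset V, Q ⊆ S →
      ((∀ S' : Finset V, Q ⊆ S' → tempIneffOn 1 E S ≤ tempIneffOn 1 E S') ↔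
       (∀ S' : Finset V, Q ⊆ S' →
          staticIneffOn (fun x y => (x, y, 0) ∈ E) S ≤
            staticIneffOn (fun x y => (x, y, 0) ∈ E) S'))) := by
  have hIneff : ∀ S : Finset V, tempIneffOn 1 E S = _ :=
    tempIneffOn_one_eq_staticIneffOn hT0
  exact ⟨hIneff, fun Q S _ => by simp only [hIneff]⟩

/-- on a finite temporal graph with a single timestamp (`T = 0`) and for
`α = 1`, the temporal inefficiency of every induced subgraph equals the static network
inefficiency of the corresponding induced static subgraph; consequently the Minimum
Temporal-Inefficiency Subgraph problem specializes to the static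
Minimum-Inefficiency-Subgraph problem. -/
theorem stmt11 [Fintype V] [DecidableEq V] (E : Set (V × V × ℕ))
    (hsym : ∀ u v t, (u, v, t) ∈ E ↔ (v, u, t) ∈ E)
    (hT0 : ∀ e ∈ E, e.2.2 = 0) :
    (∀ S : Finset V,
      tempIneffOn 1 E S = staticIneffOn (fun x y => (x, y, 0) ∈ E) S) ∧
    (∀ Q S : Finset V, Q ⊆ S →
      ((∀ S' : Finset V, Q ⊆ S' → tempIneffOn 1 E S ≤ tempIneffOn 1 E S') ↔
       (∀ S' : Finset V, Q ⊆ S' →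
          staticIneffOn (fun x y => (x, y, 0) ∈ E) S ≤
            staticIneffOn (fun x y => (x, y, 0) ∈ E) S'))) :=
  stmt11_general E hT0
end

section
/- Let (V,E) be a finite temporal graph over timestamps {0,…,T} with |V| ≥ 2 and let α ∈ (0,1]. Then the temporal network inefficiency I of (V,E) equals 0 if and only if for every pair of distinct vertices u, v ∈ V there exists a timestamp t with (u,v,t) ∈ E (equivalently, every ordered pair of distinct vertices has shortest-fastest-path distance exactly α). -/
/-! A temporal path has at least one edge and nondecreasing timestamps, so for `α ≤ 1` its
cost is at least `α` times its number of edges. Hence every distance is at least `α`, every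
summand of the inefficiency is nonnegative, and the sum vanishes iff every distance between
distinct vertices is exactly `α`; since a path of two or more edges costs at least `2α`, that
happens iff every such pair is joined by a single timestamped edge. -/

open scoped ENNReal BigOperators

variable {V : Type*}

section TemporalPaths

variable {E : Set (V × V × ℕ)} {u v : V} {p : List (V × V × ℕ)}

lemma firstTime_le_lastTime_of_chain
    (hc : List.IsChain (fun e f : V × V × ℕ => e.2.1 = f.1 ∧ e.2.2 ≤ f.2.2) p) :
    firstTime p ≤ lastTime p := by
  induction p with
  | nil => simp [firstTime, lastTime]
  | cons a l ih =>
    cases l with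
    | nil => simp [firstTime, lastTime]
    | cons b m =>
      obtain ⟨⟨-, hab⟩, hc⟩ := List.isChain_cons_cons.mp hc
      have hbm := ih hc
      simp only [firstTime, lastTime, List.head?_cons, List.getLast?_cons_cons,
        Option.map_some, Option.getD_some] at hbm ⊢
      omega

lemma IsTempPath.length_pos (hp : IsTempPath E u v p) : 0 < p.length :=
  List.length_pos_iff.mpr hp.1

lemma IsTempPath.mul_length_le_costL {α : ℝ} (hα1 : α ≤ 1) (hp : IsTempPath E u v p) :
    α * p.length ≤ costL α p := by
  have hmono : (firstTime p : ℝ) ≤ lastTime p := by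
    exact_mod_cast firstTime_le_lastTime_of_chain hp.2.2.1
  unfold costL
  nlinarith

lemma IsTempPath.singleton {t : ℕ} (h : (u, v, t) ∈ E) : IsTempPath E u v [(u, v, t)] :=
  ⟨List.cons_ne_nil _ _, by simpa using h, List.isChain_singleton _, rfl, rfl⟩

lemma IsTempPath.two_le_length (hp : IsTempPath E u v p) (huv : ∀ t, (u, v, t) ∉ E) :
    2 ≤ p.length := by
  obtain _ | ⟨⟨a, b, t⟩, _ | ⟨f, l⟩⟩ := p
  · exact absurd rfl hp.1
  · obtain ⟨hmem, -, rfl, rfl⟩ : (a, b, t) ∈ E ∧ _ ∧ a = u ∧ b = v := by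
      simpa [IsTempPath] using hp
    exact absurd hmem (huv t)
  · simp

end TemporalPaths

section Distance

variable {α : ℝ} {E : Set (V × V × ℕ)} {u v : V}

lemma ofReal_mul_le_sfpDist (hα0 : 0 ≤ α) (hα1 : α ≤ 1) {n : ℕ}
    (hn : ∀ p, IsTempPath E u v p → n ≤ p.length) :
    ENNReal.ofReal (α * n) ≤ sfpDist α E u v := by
  refine le_sInf ?_
  rintro _ ⟨p, hp, rfl⟩
  refine ENNReal.ofReal_le_ofReal ?_
  calc α * n ≤ α * p.length := by gcongr; exact hn p hp
    _ ≤ costL α p := hp.mul_length_le_costL hα1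

lemma ofReal_le_sfpDist (hα0 : 0 ≤ α) (hα1 : α ≤ 1) :
    ENNReal.ofReal α ≤ sfpDist α E u v := by
  simpa using ofReal_mul_le_sfpDist (n := 1) hα0 hα1 fun _ hp => hp.length_pos

lemma sfpDist_le_ofReal_of_mem {t : ℕ} (h : (u, v, t) ∈ E) :
    sfpDist α E u v ≤ ENNReal.ofReal α :=
  sInf_le ⟨_, IsTempPath.singleton h, by simp [costL, firstTime, lastTime]⟩

lemma sfpDist_eq_ofReal_iff (hα0 : 0 < α) (hα1 : α ≤ 1) :
    sfpDist α E u v = ENNReal.ofReal α ↔ ∃ t, (u, v, t) ∈ E := by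
  refine ⟨fun h => ?_, fun ⟨t, ht⟩ =>
    (sfpDist_le_ofReal_of_mem ht).antisymm (ofReal_le_sfpDist hα0.le hα1)⟩
  by_contra! hno
  have h2 := ofReal_mul_le_sfpDist (E := E) (u := u) (v := v) (n := 2) hα0.le hα1
    fun _ hp => hp.two_le_length hno
  rw [h, ENNReal.ofReal_le_ofReal_iff hα0.le] at h2
  push_cast at h2
  linarith

end Distance

section Inefficiency

variable {a : ℝ} {d : ℝ≥0∞}

lemma div_toReal_le_one (h : ENNReal.ofReal a ≤ d) : a / d.toReal ≤ 1 := by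
  rcases eq_or_ne d ∞ with rfl | hd
  · simp
  · exact div_le_one_of_le₀ ((ENNReal.ofReal_le_iff_le_toReal hd).mp h) ENNReal.toReal_nonneg

lemma div_toReal_eq_one_iff (ha : 0 < a) : a / d.toReal = 1 ↔ d = ENNReal.ofReal a := by
  refine ⟨fun h => ?_, fun h => by rw [h, ENNReal.toReal_ofReal ha.le, div_self ha.ne']⟩
  have hd0 : d.toReal ≠ 0 := fun h0 => by simp [h0] at h
  have hda : d.toReal = a := ((div_eq_one_iff_eq hd0).mp h).symm
  rw [← hda, ENNReal.ofReal_toReal (ENNReal.toReal_ne_zero.mp hd0).2]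

variable {α : ℝ} {E : Set (V × V × ℕ)}

lemma perPairIneff_nonneg (hα0 : 0 ≤ α) (hα1 : α ≤ 1) (u v : V) :
    0 ≤ perPairIneff α E u v := by
  have hvu := div_toReal_le_one (ofReal_le_sfpDist (E := E) (u := v) (v := u) hα0 hα1)
  have huv := div_toReal_le_one (ofReal_le_sfpDist (E := E) (u := u) (v := v) hα0 hα1)
  unfold perPairIneff
  linarith

lemma perPairIneff_eq_zero_iff (hα0 : 0 < α) (hα1 : α ≤ 1) (u v : V) :
    perPairIneff α E u v = 0 ↔
      sfpDist α E v u = ENNReal.ofReal α ∧ sfpDist α E u v = ENNReal.ofReal α := by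
  have hvu := div_toReal_le_one (ofReal_le_sfpDist (E := E) (u := v) (v := u) hα0.le hα1)
  have huv := div_toReal_le_one (ofReal_le_sfpDist (E := E) (u := u) (v := v) hα0.le hα1)
  rw [← div_toReal_eq_one_iff hα0, ← div_toReal_eq_one_iff hα0, perPairIneff]
  constructor
  · intro h; constructor <;> linarith
  · rintro ⟨h₁, h₂⟩; rw [h₁, h₂]; ring

lemma tempIneff_eq_zero_iff [Fintype V] [DecidableEq V] (hα0 : 0 < α) (hα1 : α ≤ 1) :
    tempIneff α E = 0 ↔ ∀ u v : V, u ≠ v → sfpDist α E u v = ENNReal.ofReal α := by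
  rw [tempIneff, div_eq_zero_iff, or_iff_left two_ne_zero,
    Finset.sum_eq_zero_iff_of_nonneg fun q _ => perPairIneff_nonneg hα0.le hα1 q.1 q.2]
  simp only [Finset.mem_offDiag, Finset.mem_univ, true_and, perPairIneff_eq_zero_iff hα0 hα1]
  exact ⟨fun h u v huv => (h (u, v) huv).2, fun h q hq => ⟨h _ _ (Ne.symm hq), h _ _ hq⟩⟩

end Inefficiency

theorem stmt14_general [Fintype V] [DecidableEq V] (E : Set (V × V × ℕ)) (α : ℝ)
    (hα0 : 0 < α) (hα1 : α ≤ 1) :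
    (tempIneff α E = 0 ↔ ∀ u v : V, u ≠ v → ∃ t, (u, v, t) ∈ E) ∧
    (tempIneff α E = 0 ↔ ∀ u v : V, u ≠ v → sfpDist α E u v = ENNReal.ofReal α) := by
  have hzero := tempIneff_eq_zero_iff (E := E) hα0 hα1
  refine ⟨hzero.trans ?_, hzero⟩
  exact forall₂_congr fun u v => imp_congr_right fun _ => sfpDist_eq_ofReal_iff hα0 hα1

/-- on a finite temporal graph with at least two vertices and
`α ∈ (0,1]`, the temporal network inefficiency vanishes iff every pair of distinct
vertices is joined by a direct timestamped edge, equivalently iff every ordered pair of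
distinct vertices has shortest-fastest-path distance exactly `α`. -/
theorem stmt14 [Fintype V] [DecidableEq V] (T : ℕ) (E : Set (V × V × ℕ)) (α : ℝ)
    (hsym : ∀ u v t, (u, v, t) ∈ E ↔ (v, u, t) ∈ E)
    (hT : ∀ e ∈ E, e.2.2 ≤ T)
    (hcard : 2 ≤ Fintype.card V) (hα0 : 0 < α) (hα1 : α ≤ 1) :
    (tempIneff α E = 0 ↔ ∀ u v : V, u ≠ v → ∃ t, (u, v, t) ∈ E) ∧
    (tempIneff α E = 0 ↔ ∀ u v : V, u ≠ v → sfpDist α E u v = ENNReal.ofReal α) :=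
  stmt14_general E α hα0 hα1
end
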